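/- arXiv:2510.00924 — 6 statements merged into one kernel-verified Lean document; each statement's English description precedes it below -/
import Mathlib

section
/- The representation of the 2-loop quiver on Lⁿ given by the two matrices φ₁ and φ₂ is irreducible: the only L-linear subspaces U ⊆ Lⁿ satisfying φ₁ · U ⊆ U and φ₂ · U ⊆ U (action by matrix-vector multiplication) are U = 0 and U = Lⁿ. -/
open TensorProduct in
/-- The representation of the 2-loop quiver on `Lⁿ` given by `φ₁ = Φ(1 ⊗ d₁)` and
`φ₂ = Φ(1 ⊗ d₂)` is irreducible: the only subspaces stable under both matrices
are `0` and `Lⁿ`. -/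
theorem two_loop_rep_irreducible
    (K : Type*) [Field K] [CharZero K]
    (D : Type*) [DivisionRing D] [Algebra K D] [Algebra.IsCentral K D]
    [FiniteDimensional K D]
    (n : ℕ) (hdim : Module.finrank K D = n ^ 2)
    (L : Type*) [Field L] [Algebra K L]
    (Φ : (L ⊗[K] D) ≃ₐ[L] Matrix (Fin n) (Fin n) L)
    (d₁ d₂ : D) (hgen : Algebra.adjoin K ({d₁, d₂} : Set D) = ⊤) :
    ∀ U : Submodule L (Fin n → L),
      (∀ x ∈ U, (Φ ((1 : L) ⊗ₜ[K] d₁)).mulVec x ∈ U) →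
      (∀ x ∈ U, (Φ ((1 : L) ⊗ₜ[K] d₂)).mulVec x ∈ U) →
      U = ⊥ ∨ U = ⊤ := by
  intro U h1 h2
  -- The stabilizer subalgebra of U inside Mₙ(L)
  let S : Subalgebra L (Matrix (Fin n) (Fin n) L) :=
  { carrier := {M | ∀ x ∈ U, M.mulVec x ∈ U}
    mul_mem' := fun {a b} ha hb x hx => by
      rw [← Matrix.mulVec_mulVec]; exact ha _ (hb x hx)
    one_mem' := fun x hx => by rwa [Matrix.one_mulVec]
    add_mem' := fun {a b} ha hb x hx => by
      rw [Matrix.add_mulVec]; exact U.add_mem (ha x hx) (hb x hx)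
    algebraMap_mem' := fun c x hx => by
      rw [Algebra.algebraMap_eq_smul_one, Matrix.smul_mulVec, Matrix.one_mulVec]
      exact U.smul_mem c hx }
  set A : Subalgebra L (L ⊗[K] D) :=
    Algebra.adjoin L ({(1 : L) ⊗ₜ[K] d₁, (1 : L) ⊗ₜ[K] d₂} : Set (L ⊗[K] D)) with hAdef
  have hT : ∀ d : D, (1 : L) ⊗ₜ[K] d ∈ A := by
    intro d
    have hd : d ∈ Algebra.adjoin K ({d₁, d₂} : Set D) := by rw [hgen]; trivial
    induction hd using Algebra.adjoin_induction with
    | mem x hx =>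
        rcases hx with rfl | rfl
        · exact Algebra.subset_adjoin (Set.mem_insert _ _)
        · exact Algebra.subset_adjoin (Set.mem_insert_of_mem _ rfl)
    | algebraMap r =>
        rw [Algebra.algebraMap_eq_smul_one, TensorProduct.tmul_smul,
          ← algebraMap_smul L r ((1 : L) ⊗ₜ[K] (1 : D)), ← Algebra.TensorProduct.one_def]
        exact A.smul_mem A.one_mem _
    | add x y _ _ hx hy =>
        rw [TensorProduct.tmul_add]; exact A.add_mem hx hy
    | mul x y _ _ hx hy =>
        rw [show (1 : L) ⊗ₜ[K] (x * y) = ((1 : L) ⊗ₜ[K] x) * ((1 : L) ⊗ₜ[K] y) by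
          rw [Algebra.TensorProduct.tmul_mul_tmul, one_mul]]
        exact A.mul_mem hx hy
  have hA : A = ⊤ := by
    rw [eq_top_iff]
    intro z hz
    clear hz
    induction z using TensorProduct.induction_on with
    | zero => exact A.zero_mem
    | tmul l d =>
        have : l ⊗ₜ[K] d = l • ((1 : L) ⊗ₜ[K] d) := by
          rw [TensorProduct.smul_tmul', smul_eq_mul, mul_one]
        rw [this]
        exact A.smul_mem (hT d) l
    | add x y hx hy => exact A.add_mem hx hy
  -- Every matrix stabilizes U
  have hS : ∀ M : Matrix (Fin n) (Fin n) L, ∀ x ∈ U, M.mulVec x ∈ U := by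
    intro M
    have hmem : M ∈ A.map Φ.toAlgHom :=
      ⟨Φ.symm M, by rw [hA]; trivial, Φ.apply_symm_apply M⟩
    rw [hAdef, AlgHom.map_adjoin, Set.image_pair] at hmem
    have hle : Algebra.adjoin L
        ({Φ.toAlgHom ((1 : L) ⊗ₜ[K] d₁), Φ.toAlgHom ((1 : L) ⊗ₜ[K] d₂)} :
          Set (Matrix (Fin n) (Fin n) L)) ≤ S := by
      apply Algebra.adjoin_le
      rintro m (rfl | rfl)
      · exact h1
      · exact h2
    exact hle hmem
  by_cases hU : U = ⊥
  · exact Or.inl hU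
  · right
    obtain ⟨x, hxU, hx0⟩ := Submodule.exists_mem_ne_zero_of_ne_bot hU
    obtain ⟨j, hj⟩ : ∃ j, x j ≠ 0 := by
      by_contra h
      push_neg at h
      exact hx0 (funext h)
    rw [Submodule.eq_top_iff']
    intro y
    have key : ∀ i : Fin n, Pi.single i (y i) ∈ U := by
      intro i
      have := hS (Matrix.single i j (y i * (x j)⁻¹)) x hxU
      have heq : (Matrix.single i j (y i * (x j)⁻¹)).mulVec x
          = Pi.single i (y i) := by
        funext k
        simp only [Matrix.mulVec, dotProduct, Matrix.single]
        rw [Finset.sum_eq_single j]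
        · by_cases hk : i = k
          · subst hk
            simp [mul_assoc, inv_mul_cancel₀ hj]
          · simp [hk, Pi.single_eq_of_ne (Ne.symm hk)]
        · intro b _ hb
          simp [Ne.symm hb]
        · simp
      rwa [heq] at this
    have : y = ∑ i, Pi.single i (y i) := (Finset.univ_sum_single y).symm
    rw [this]
    exact Submodule.sum_mem U fun i _ => key i
end

section
/- The representation of the 2-loop quiver on Lⁿ given by φ₁ and φ₂ is absolutely irreducible: for every field extension E of L, the only E-linear subspaces U ⊆ Eⁿ that are stable under matrix-vector multiplication by the base-changed matrices φ₁^E and φ₂^E (obtained by applying the embedding L → E to each entry of φ₁ and φ₂) are U = 0 and U = Eⁿ. -/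
open TensorProduct in
/-- The representation of the 2-loop quiver on `Lⁿ` given by `φ₁ = Φ(1 ⊗ d₁)` and
`φ₂ = Φ(1 ⊗ d₂)` is absolutely irreducible: after base change to any field
extension `E` of `L`, the only subspaces of `Eⁿ` stable under both matrices are
`0` and `Eⁿ`. -/
theorem two_loop_rep_absolutely_irreducible
    (K : Type*) [Field K] [CharZero K]
    (D : Type*) [DivisionRing D] [Algebra K D] [Algebra.IsCentral K D]
    [FiniteDimensional K D]
    (n : ℕ) (hdim : Module.finrank K D = n ^ 2)
    (L : Type*) [Field L] [Algebra K L]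
    (Φ : (L ⊗[K] D) ≃ₐ[L] Matrix (Fin n) (Fin n) L)
    (d₁ d₂ : D) (hgen : Algebra.adjoin K ({d₁, d₂} : Set D) = ⊤) :
    ∀ (E : Type*) [Field E] [Algebra L E],
      ∀ U : Submodule E (Fin n → E),
        (∀ x ∈ U, ((Φ ((1 : L) ⊗ₜ[K] d₁)).map (algebraMap L E)).mulVec x ∈ U) →
        (∀ x ∈ U, ((Φ ((1 : L) ⊗ₜ[K] d₂)).map (algebraMap L E)).mulVec x ∈ U) →
        U = ⊥ ∨ U = ⊤ := by
  intro E _ _ U h1 h2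
  -- Step 1: 1 ⊗ d₁, 1 ⊗ d₂ generate L ⊗ D over L
  have hadjLD : Algebra.adjoin L ({(1:L) ⊗ₜ[K] d₁, (1:L) ⊗ₜ[K] d₂} : Set (L ⊗[K] D)) = ⊤ := by
    rw [eq_top_iff]
    rintro z -
    induction z using TensorProduct.induction_on with
    | zero => exact Subalgebra.zero_mem _
    | add x y hx hy => exact Subalgebra.add_mem _ hx hy
    | tmul l d =>
      have hd : ((1:L) ⊗ₜ[K] d : L ⊗[K] D) ∈
          Algebra.adjoin L ({(1:L) ⊗ₜ[K] d₁, (1:L) ⊗ₜ[K] d₂} : Set (L ⊗[K] D)) := by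
        have hdmem : d ∈ Algebra.adjoin K ({d₁, d₂} : Set D) := hgen ▸ trivial
        induction hdmem using Algebra.adjoin_induction with
        | mem x hx =>
          rcases hx with h | h
          · exact Algebra.subset_adjoin (by left; rw [h])
          · exact Algebra.subset_adjoin (by rw [Set.mem_singleton_iff.mp h]; right; rfl)
        | algebraMap k =>
          have h0 : ((1:L) ⊗ₜ[K] (algebraMap K D k) : L ⊗[K] D) = algebraMap K _ k := by
            rw [Algebra.TensorProduct.algebraMap_apply]
            simp [Algebra.algebraMap_eq_smul_one, TensorProduct.smul_tmul]
          rw [h0, IsScalarTower.algebraMap_apply K L (L ⊗[K] D)]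
          exact Subalgebra.algebraMap_mem _ _
        | add x y hx hy hx' hy' =>
          rw [TensorProduct.tmul_add]; exact Subalgebra.add_mem _ hx' hy'
        | mul x y hx hy hx' hy' =>
          have : ((1:L) ⊗ₜ[K] (x*y) : L ⊗[K] D) = ((1:L) ⊗ₜ[K] x) * ((1:L) ⊗ₜ[K] y) := by
            rw [Algebra.TensorProduct.tmul_mul_tmul, one_mul]
          rw [this]; exact Subalgebra.mul_mem _ hx' hy'
      have : (l ⊗ₜ[K] d : L ⊗[K] D) = l • ((1:L) ⊗ₜ[K] d) := by
        rw [TensorProduct.smul_tmul', smul_eq_mul, mul_one]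
      rw [this]
      exact Subalgebra.smul_mem _ hd l
  -- transport along Φ
  set φ₁ : Matrix (Fin n) (Fin n) L := Φ ((1:L) ⊗ₜ[K] d₁) with hφ₁
  set φ₂ : Matrix (Fin n) (Fin n) L := Φ ((1:L) ⊗ₜ[K] d₂) with hφ₂
  have hadjM : Algebra.adjoin L ({φ₁, φ₂} : Set (Matrix (Fin n) (Fin n) L)) = ⊤ := by
    have := AlgHom.map_adjoin (Φ.toAlgHom) ({(1:L) ⊗ₜ[K] d₁, (1:L) ⊗ₜ[K] d₂} : Set (L ⊗[K] D))
    rw [hadjLD] at this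
    have himg : Φ.toAlgHom '' {(1:L) ⊗ₜ[K] d₁, (1:L) ⊗ₜ[K] d₂} = {φ₁, φ₂} := by
      rw [Set.image_insert_eq, Set.image_singleton]; rfl
    rw [himg] at this
    rw [← this, Algebra.map_top]
    exact (AlgHom.range_eq_top _).mpr Φ.surjective
  -- Step 2: the set of E-matrices preserving U is a subalgebra
  set f : Matrix (Fin n) (Fin n) L →ₐ[L] Matrix (Fin n) (Fin n) E :=
    (Algebra.ofId L E).mapMatrix with hf
  have hfapp : ∀ M : Matrix (Fin n) (Fin n) L, f M = M.map (algebraMap L E) := fun M => rfl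
  set S : Subalgebra E (Matrix (Fin n) (Fin n) E) :=
    { carrier := {M | ∀ x ∈ U, M.mulVec x ∈ U}
      mul_mem' := fun {M N} hM hN x hx => by
        rw [← Matrix.mulVec_mulVec]; exact hM _ (hN _ hx)
      add_mem' := fun {M N} hM hN x hx => by
        rw [Matrix.add_mulVec]; exact U.add_mem (hM _ hx) (hN _ hx)
      algebraMap_mem' := fun c x hx => by
        have : (algebraMap E (Matrix (Fin n) (Fin n) E) c).mulVec x = c • x := by
          ext k
          simp [Matrix.mulVec, dotProduct, Matrix.algebraMap_matrix_apply,
            ite_mul, Finset.sum_ite_eq]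
        rw [this]; exact U.smul_mem c hx } with hS
  have hSmem : ∀ M : Matrix (Fin n) (Fin n) E,
      (M ∈ S ↔ ∀ x ∈ U, M.mulVec x ∈ U) := fun M => Iff.rfl
  -- every matrix in the image of f lies in S
  have hfS : ∀ M : Matrix (Fin n) (Fin n) L, f M ∈ S := by
    intro M
    have hle : Algebra.adjoin L ({f φ₁, f φ₂} : Set _) ≤ S.restrictScalars L := by
      apply Algebra.adjoin_le
      rintro x (h | h)
      · rw [h]; intro y hy; rw [hfapp]; exact h1 y hy
      · rw [Set.mem_singleton_iff.mp h]; intro y hy; rw [hfapp]; exact h2 y hy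
    have : f M ∈ Algebra.adjoin L ({f φ₁, f φ₂} : Set _) := by
      have himg : f '' {φ₁, φ₂} = {f φ₁, f φ₂} := by
        rw [Set.image_insert_eq, Set.image_singleton]
      rw [← himg, ← AlgHom.map_adjoin, hadjM, Algebra.map_top]
      exact ⟨M, rfl⟩
    exact hle this
  -- std basis matrices preserve U
  have hstd : ∀ (i j : Fin n) (c : E),
      ∀ x ∈ U, (Matrix.single i j c).mulVec x ∈ U := by
    intro i j c x hx
    have h1' : (Matrix.single i j (1:E)) ∈ S := by
      have := hfS (Matrix.single i j (1:L))
      have heq : f (Matrix.single i j (1:L)) = Matrix.single i j (1:E) := by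
        rw [hfapp]
        ext a b
        simp [Matrix.single, Matrix.map_apply, apply_ite (algebraMap L E)]
      rwa [heq] at this
    have hc : (Matrix.single i j c) ∈ S := by
      have : Matrix.single i j c = c • Matrix.single i j (1:E) := by
        rw [Matrix.smul_single, smul_eq_mul, mul_one]
      rw [this]
      exact S.smul_mem h1' c
    exact hc x hx
  -- Step 3: conclude
  by_cases hU : U = ⊥
  · exact Or.inl hU
  · right
    obtain ⟨x, hxU, hx0⟩ := Submodule.exists_mem_ne_zero_of_ne_bot hU
    obtain ⟨j, hj⟩ : ∃ j, x j ≠ 0 := by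
      by_contra h
      push_neg at h
      exact hx0 (funext h)
    have hsingle : ∀ i : Fin n, Pi.single i (1:E) ∈ U := by
      intro i
      have := hstd i j (x j)⁻¹ x hxU
      have heq : (Matrix.single i j (x j)⁻¹).mulVec x = Pi.single i (1:E) := by
        ext k
        simp only [Matrix.mulVec, dotProduct, Matrix.single]
        rw [Finset.sum_eq_single j]
        · by_cases hk : i = k
          · subst hk; simp [inv_mul_cancel₀ hj]
          · simp [hk, Pi.single_apply, Ne.symm hk]
        · intro b _ hb; simp [Ne.symm hb]
        · intro h; exact absurd (Finset.mem_univ j) h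
      rwa [heq] at this
    rw [eq_top_iff]
    intro v _
    have : v = ∑ i, v i • (Pi.single i (1:E) : Fin n → E) := by
      ext k
      simp [Pi.single_apply, Finset.sum_ite_eq', mul_comm]
    rw [this]
    exact Submodule.sum_mem U fun i _ => U.smul_mem _ (hsingle i)
end

section
/- Assume [L : K] = n. Let A be the K-subalgebra of End_K(Lⁿ) generated by the two operators x ↦ φ₁ · x and x ↦ φ₂ · x. Then the centralizer of A in End_K(Lⁿ), i.e. the set of K-linear endomorphisms f of Lⁿ with f ∘ a = a ∘ f for all a ∈ A, is isomorphic as a K-algebra to the opposite algebra D^op of D. -/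
section Aux

variable {K : Type*} [Field K] {D : Type*} [DivisionRing D] [Algebra K D]
variable {M : Type*} [AddCommGroup M] [Module K M]

theorem aux_centralizer (ρ : D →ₐ[K] Module.End K M)
    [FiniteDimensional K D] [FiniteDimensional K M]
    (hM : Module.finrank K M = Module.finrank K D) :
    Nonempty ((Subalgebra.centralizer K
      ((ρ.range : Subalgebra K (Module.End K M)) : Set (Module.End K M))) ≃ₐ[K] Dᵐᵒᵖ) := by
  letI instD : Module D M := Module.compHom M ρ.toRingHom
  have smul_def : ∀ (d : D) (m : M), d • m = ρ d m := fun d m => rfl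
  haveI : IsScalarTower K D M :=
    ⟨fun k d m => by
      rw [smul_def, smul_def, map_smul]
      rfl⟩
  haveI : SMulCommClass D K M :=
    ⟨fun d k m => by rw [smul_def, smul_def, map_smul]⟩
  haveI : Module.Finite D M := Module.Finite.of_restrictScalars_finite K D M
  have hpos : 0 < Module.finrank K D := Module.finrank_pos
  have htower : Module.finrank K D * Module.finrank D M = Module.finrank K M :=
    Module.finrank_mul_finrank K D M
  have h1 : Module.finrank D M = 1 := by
    rw [hM] at htower
    exact Nat.eq_of_mul_eq_mul_left hpos (by rw [htower, mul_one])
  obtain ⟨b⟩ := (finrank_eq_one_iff (Fin 1)).mp h1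
  let e : M ≃ₗ[D] D := b.repr.trans (Finsupp.LinearEquiv.finsuppUnique D D (Fin 1))
  let C := Subalgebra.centralizer K
      ((ρ.range : Subalgebra K (Module.End K M)) : Set (Module.End K M))
  let e1 : C ≃+* Module.End D M :=
  { toFun := fun f =>
      { toFun := f.1
        map_add' := f.1.map_add
        map_smul' := fun d m => by
          have hc := (Subalgebra.mem_centralizer_iff K).mp f.2 (ρ d) ⟨d, rfl⟩
          have h2 := DFunLike.congr_fun hc m
          simpa [smul_def, Module.End.mul_apply] using h2.symm }
    invFun := fun g =>
      ⟨g.restrictScalars K, by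
        rw [Subalgebra.mem_centralizer_iff]
        rintro _ ⟨d, rfl⟩
        ext m
        have := (g.map_smul d m).symm
        simpa [smul_def, Module.End.mul_apply] using this⟩
    left_inv := fun f => Subtype.ext (LinearMap.ext fun m => rfl)
    right_inv := fun g => LinearMap.ext fun m => rfl
    map_mul' := fun f g => LinearMap.ext fun m => rfl
    map_add' := fun f g => LinearMap.ext fun m => rfl }
  let e2 : Module.End D M ≃+* Module.End D D :=
  { toFun := fun f => (e.toLinearMap.comp f).comp e.symm.toLinearMap
    invFun := fun g => (e.symm.toLinearMap.comp g).comp e.toLinearMap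
    left_inv := fun f => by ext; simp
    right_inv := fun g => by ext; simp
    map_mul' := fun f g => by ext; simp [Module.End.mul_apply]
    map_add' := fun f g => by ext; simp }
  let e3 : Module.End D D ≃+* Dᵐᵒᵖ := (RingEquiv.moduleEndSelf D).symm
  refine ⟨AlgEquiv.ofRingEquiv (f := (e1.trans e2).trans e3) (fun k => ?_)⟩
  apply MulOpposite.unop_injective
  show e ((algebraMap K (Module.End K M) k) (e.symm 1)) = algebraMap K D k
  rw [Module.algebraMap_end_apply, ← algebraMap_smul D k (e.symm (1 : D)), map_smul,
    LinearEquiv.apply_symm_apply, smul_eq_mul, mul_one]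

end Aux

open TensorProduct in
/-- If `[L : K] = n`, the centralizer in `End_K(Lⁿ)` of the `K`-subalgebra `A`
generated by the operators `x ↦ φ₁ · x` and `x ↦ φ₂ · x` is isomorphic to `Dᵒᵖ`
as a `K`-algebra. -/
theorem endomorphism_ring_is_D_op
    (K : Type*) [Field K] [CharZero K]
    (D : Type*) [DivisionRing D] [Algebra K D] [Algebra.IsCentral K D]
    [FiniteDimensional K D]
    (n : ℕ) (hdim : Module.finrank K D = n ^ 2)
    (L : Type*) [Field L] [Algebra K L] (hdeg : Module.finrank K L = n)
    (Φ : (L ⊗[K] D) ≃ₐ[L] Matrix (Fin n) (Fin n) L)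
    (d₁ d₂ : D) (hgen : Algebra.adjoin K ({d₁, d₂} : Set D) = ⊤) :
    Nonempty
      ((Subalgebra.centralizer K
        (((Algebra.adjoin K
          ({((Φ ((1 : L) ⊗ₜ[K] d₁)).mulVecLin.restrictScalars K : Module.End K (Fin n → L)),
            ((Φ ((1 : L) ⊗ₜ[K] d₂)).mulVecLin.restrictScalars K : Module.End K (Fin n → L))} :
            Set (Module.End K (Fin n → L)))) : Subalgebra K (Module.End K (Fin n → L))) :
            Set (Module.End K (Fin n → L)))) ≃ₐ[K]
        Dᵐᵒᵖ) := by
  have hDpos : 0 < Module.finrank K D := Module.finrank_pos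
  have hn : 0 < n := by
    rcases Nat.eq_zero_or_pos n with h | h
    · rw [h] at hdim; simp [hdim] at hDpos
    · exact h
  have hLfin : FiniteDimensional K L := Module.finite_of_finrank_pos (by rw [hdeg]; exact hn)
  let endRes : Module.End L (Fin n → L) →ₐ[K] Module.End K (Fin n → L) :=
  { toFun := fun f => f.restrictScalars K
    map_one' := rfl
    map_mul' := fun _ _ => rfl
    map_zero' := rfl
    map_add' := fun _ _ => rfl
    commutes' := fun k => rfl }
  let ρ : D →ₐ[K] Module.End K (Fin n → L) :=
    endRes.comp (((Matrix.toLinAlgEquiv' :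
        Matrix (Fin n) (Fin n) L ≃ₐ[L] Module.End L (Fin n → L)).toAlgHom.restrictScalars K).comp
      ((Φ.toAlgHom.restrictScalars K).comp (Algebra.TensorProduct.includeRight)))
  have hρ : ∀ d : D, ρ d = ((Φ ((1 : L) ⊗ₜ[K] d)).mulVecLin.restrictScalars K :
      Module.End K (Fin n → L)) := by
    intro d
    ext v
    simp [ρ, endRes, Matrix.toLinAlgEquiv'_apply, Matrix.mulVecLin_apply, AlgHom.coe_mk,
      RingHom.coe_mk, MonoidHom.coe_mk, OneHom.coe_mk]
    exact dotProduct_single (α := L) (v := Φ (1 ⊗ₜ[K] d) _) _ v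
  have hA : Algebra.adjoin K
      ({((Φ ((1 : L) ⊗ₜ[K] d₁)).mulVecLin.restrictScalars K : Module.End K (Fin n → L)),
        ((Φ ((1 : L) ⊗ₜ[K] d₂)).mulVecLin.restrictScalars K : Module.End K (Fin n → L))} :
        Set (Module.End K (Fin n → L))) = ρ.range := by
    rw [← hρ d₁, ← hρ d₂, ← Set.image_pair, ← AlgHom.map_adjoin, hgen, Algebra.map_top]
  rw [hA]
  have hM : Module.finrank K (Fin n → L) = Module.finrank K D := by
    rw [hdim, Module.finrank_pi_fintype, Finset.sum_const, Finset.card_univ, Fintype.card_fin,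
      hdeg, smul_eq_mul, sq]
  exact aux_centralizer ρ hM
end

section
/- Assume [L : K] = n. The K-rational representation of the 2-loop quiver on Lⁿ given by φ₁ and φ₂ is indecomposable over K: there is no decomposition Lⁿ = U ⊕ W into two nonzero K-linear subspaces U, W such that both U and W are stable under matrix-vector multiplication by φ₁ and by φ₂. -/
open TensorProduct in
/-- If `[L : K] = n`, the `K`-rational representation of the 2-loop quiver on `Lⁿ`
given by `φ₁` and `φ₂` is indecomposable over `K`: there is no direct sum
decomposition `Lⁿ = U ⊕ W` into nonzero `K`-subspaces each stable under `φ₁`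
and `φ₂`. -/
theorem rational_rep_indecomposable
    (K : Type*) [Field K] [CharZero K]
    (D : Type*) [DivisionRing D] [Algebra K D] [Algebra.IsCentral K D]
    [FiniteDimensional K D]
    (n : ℕ) (hdim : Module.finrank K D = n ^ 2)
    (L : Type*) [Field L] [Algebra K L] (hdeg : Module.finrank K L = n)
    (Φ : (L ⊗[K] D) ≃ₐ[L] Matrix (Fin n) (Fin n) L)
    (d₁ d₂ : D) (hgen : Algebra.adjoin K ({d₁, d₂} : Set D) = ⊤) :
    ¬ ∃ U W : Submodule K (Fin n → L),
        U ≠ ⊥ ∧ W ≠ ⊥ ∧ U ⊓ W = ⊥ ∧ U ⊔ W = ⊤ ∧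
        (∀ x ∈ U, (Φ ((1 : L) ⊗ₜ[K] d₁)).mulVec x ∈ U) ∧
        (∀ x ∈ U, (Φ ((1 : L) ⊗ₜ[K] d₂)).mulVec x ∈ U) ∧
        (∀ x ∈ W, (Φ ((1 : L) ⊗ₜ[K] d₁)).mulVec x ∈ W) ∧
        (∀ x ∈ W, (Φ ((1 : L) ⊗ₜ[K] d₂)).mulVec x ∈ W) := by
  rintro ⟨U, W, hU, hW, hinf, hsup, hU1, hU2, hW1, hW2⟩
  -- the K-algebra map D → Mₙ(L)
  set ψ : D →ₐ[K] Matrix (Fin n) (Fin n) L :=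
    ((Φ.toAlgHom.restrictScalars K).comp Algebra.TensorProduct.includeRight) with hψ
  have hψd : ∀ d : D, ψ d = Φ ((1 : L) ⊗ₜ[K] d) := fun d => rfl
  -- n > 0 and finite dimensionality of L
  have hDpos : 0 < Module.finrank K D := Module.finrank_pos
  have hn : 0 < n := by
    rcases Nat.eq_zero_or_pos n with h | h
    · rw [hdim, h] at hDpos; simp at hDpos
    · exact h
  have hLfin : FiniteDimensional K L := FiniteDimensional.of_finrank_pos (hdeg ▸ hn)
  have hVfin : FiniteDimensional K (Fin n → L) := by infer_instance
  have hVdim : Module.finrank K (Fin n → L) = n ^ 2 := by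
    rw [Module.finrank_pi_fintype, hdeg]
    simp [sq]
  -- any nonzero K-subspace stable under d₁ and d₂ has dimension ≥ n²
  have key : ∀ (V : Submodule K (Fin n → L)), V ≠ ⊥ →
      (∀ x ∈ V, (ψ d₁).mulVec x ∈ V) → (∀ x ∈ V, (ψ d₂).mulVec x ∈ V) →
      n ^ 2 ≤ Module.finrank K V := by
    intro V hVne h1 h2
    -- the stabilizer subalgebra
    set S : Subalgebra K D :=
      { carrier := { d | ∀ x ∈ V, (ψ d).mulVec x ∈ V }
        mul_mem' := by
          intro a b ha hb x hx
          have : (ψ (a * b)).mulVec x = (ψ a).mulVec ((ψ b).mulVec x) := by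
            rw [map_mul, Matrix.mulVec_mulVec]
          rw [this]
          exact ha _ (hb _ hx)
        add_mem' := by
          intro a b ha hb x hx
          have : (ψ (a + b)).mulVec x = (ψ a).mulVec x + (ψ b).mulVec x := by
            rw [map_add, Matrix.add_mulVec]
          rw [this]
          exact V.add_mem (ha _ hx) (hb _ hx)
        algebraMap_mem' := by
          intro c x hx
          have : (ψ (algebraMap K D c)).mulVec x = c • x := by
            rw [AlgHom.commutes]
            have : (algebraMap K (Matrix (Fin n) (Fin n) L) c) = c • (1 : Matrix (Fin n) (Fin n) L) := by
              rw [Algebra.algebraMap_eq_smul_one]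
            rw [this, Matrix.smul_mulVec, Matrix.one_mulVec]
          rw [this]
          exact V.smul_mem c hx } with hS
    have hSall : ∀ d : D, ∀ x ∈ V, (ψ d).mulVec x ∈ V := by
      intro d
      have : d ∈ S := by
        have hle : Algebra.adjoin K ({d₁, d₂} : Set D) ≤ S := by
          apply Algebra.adjoin_le
          rintro y (rfl | rfl)
          · exact h1
          · exact h2
        rw [hgen] at hle
        exact hle trivial
      exact this
    -- pick a nonzero vector in V
    obtain ⟨u, huV, hu0⟩ := Submodule.exists_mem_ne_zero_of_ne_bot hVne
    -- the K-linear map D → V, d ↦ ψ d *ᵥ u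
    let f : D →ₗ[K] V :=
      { toFun := fun d => ⟨(ψ d).mulVec u, hSall d u huV⟩
        map_add' := by
          intro a b
          ext
          simp [Matrix.add_mulVec]
        map_smul' := by
          intro c a
          ext
          simp [map_smul, Matrix.smul_mulVec] }
    have hf : Function.Injective f := by
      rw [injective_iff_map_eq_zero]
      intro d hd
      by_contra hd0
      have h0 : (ψ d).mulVec u = 0 := congrArg Subtype.val hd
      have : u = 0 := by
        have := congrArg (fun v => (ψ d⁻¹).mulVec v) h0
        simpa [Matrix.mulVec_mulVec, ← map_mul, inv_mul_cancel₀ hd0] using this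
      exact hu0 this
    calc n ^ 2 = Module.finrank K D := hdim.symm
      _ ≤ Module.finrank K V := LinearMap.finrank_le_finrank_of_injective hf
  -- dimensions add
  have hadd := Submodule.finrank_sup_add_finrank_inf_eq U W
  rw [hinf, hsup] at hadd
  simp only [finrank_top, finrank_bot, add_zero] at hadd
  have hUdim := key U hU hU1 hU2
  have hWpos : 0 < Module.finrank K W := by
    have : Nontrivial W := Submodule.nontrivial_iff_ne_bot.mpr hW
    exact Module.finrank_pos
  rw [hVdim] at hadd
  omega
end

section
/- The representation (φ₁, φ₂) does not descend to K unless D = K: if there exist an invertible matrix g ∈ GLₙ(L) and matrices ψ₁, ψ₂ ∈ Mₙ(L) all of whose entries lie in the image of K in L, such that g · φᵢ · g⁻¹ = ψᵢ for i = 1, 2, then n = 1 (equivalently, D is isomorphic to K). -/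
/-- Conjugation by a unit as a `K`-algebra homomorphism. -/
def conjAlgHom (K A : Type*) [CommSemiring K] [Semiring A] [Algebra K A] (u : Aˣ) :
    A →ₐ[K] A where
  toFun x := u * x * ↑u⁻¹
  map_one' := by simp
  map_mul' x y := by simp only [mul_assoc, Units.inv_mul_cancel_left]
  map_zero' := by simp
  map_add' x y := by simp [mul_add, add_mul]
  commutes' r := by
    simp only [← Algebra.commutes r (u : A), mul_assoc, Units.mul_inv_cancel_left]
    simp


open TensorProduct Matrix in
/-- The representation `(φ₁, φ₂)` does not descend to `K` unless `D = K`: if some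
`g ∈ GLₙ(L)` conjugates both `φ₁` and `φ₂` into matrices with entries in (the
image of) `K`, then `n = 1`. -/
theorem no_descent_unless_trivial
    (K : Type*) [Field K] [CharZero K]
    (D : Type*) [DivisionRing D] [Algebra K D] [Algebra.IsCentral K D]
    [FiniteDimensional K D]
    (n : ℕ) (hdim : Module.finrank K D = n ^ 2)
    (L : Type*) [Field L] [Algebra K L]
    (Φ : (L ⊗[K] D) ≃ₐ[L] Matrix (Fin n) (Fin n) L)
    (d₁ d₂ : D) (hgen : Algebra.adjoin K ({d₁, d₂} : Set D) = ⊤)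
    (h : ∃ (g : GL (Fin n) L) (ψ₁ ψ₂ : Matrix (Fin n) (Fin n) L),
      (∀ i j, ψ₁ i j ∈ Set.range (algebraMap K L)) ∧
      (∀ i j, ψ₂ i j ∈ Set.range (algebraMap K L)) ∧
      (g : Matrix (Fin n) (Fin n) L) * Φ ((1 : L) ⊗ₜ[K] d₁) * (↑g⁻¹ : Matrix (Fin n) (Fin n) L) = ψ₁ ∧
      (g : Matrix (Fin n) (Fin n) L) * Φ ((1 : L) ⊗ₜ[K] d₂) * (↑g⁻¹ : Matrix (Fin n) (Fin n) L) = ψ₂) :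
    n = 1 := by
  obtain ⟨g, ψ₁, ψ₂, hψ₁, hψ₂, h1, h2⟩ := h
  have hn0 : n ≠ 0 := by
    intro hn
    have := Module.finrank_pos (R := K) (M := D)
    rw [hdim, hn] at this
    simp at this
  haveI : Nonempty (Fin n) := Fin.pos_iff_nonempty.mp (Nat.pos_of_ne_zero hn0)
  -- the K-algebra hom D → Mₙ(L)
  set f : D →ₐ[K] Matrix (Fin n) (Fin n) L :=
    ((conjAlgHom K _ (g : (Matrix (Fin n) (Fin n) L)ˣ)).comp
      ((Φ.toAlgHom.restrictScalars K).comp (Algebra.TensorProduct.includeRight))) with hf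
  have hfd : ∀ d : D, f d = (g : Matrix (Fin n) (Fin n) L) * Φ ((1 : L) ⊗ₜ[K] d)
      * (↑g⁻¹ : Matrix (Fin n) (Fin n) L) := fun d => rfl
  have hfinj : Function.Injective f := f.toRingHom.injective
  -- the entrywise algebraMap, Mₙ(K) → Mₙ(L)
  set m : Matrix (Fin n) (Fin n) K →ₐ[K] Matrix (Fin n) (Fin n) L :=
    (Algebra.ofId K L).mapMatrix with hm
  have hminj : Function.Injective m := fun x y hxy => by
    ext i j
    exact (algebraMap K L).injective (congrFun (congrFun hxy i) j)
  -- range of f is contained in range of m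
  have hrange : f.range ≤ m.range := by
    have : f.range = Algebra.adjoin K ({f d₁, f d₂} : Set _) := by
      rw [← Algebra.map_top, ← hgen, AlgHom.map_adjoin,
        Set.image_pair]
    rw [this]
    apply Algebra.adjoin_le
    rintro x (rfl | rfl)
    · refine ⟨Matrix.of fun i j => (hψ₁ i j).choose, ?_⟩
      rw [hfd, h1]; ext i j; exact (hψ₁ i j).choose_spec
    · refine ⟨Matrix.of fun i j => (hψ₂ i j).choose, ?_⟩
      rw [hfd, h2]; ext i j; exact (hψ₂ i j).choose_spec
  -- switch to submodules and compare finranks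
  have hsub : Subalgebra.toSubmodule f.range ≤ Subalgebra.toSubmodule m.range :=
    hrange
  have hfr1 : Subalgebra.toSubmodule f.range = LinearMap.range f.toLinearMap := by
    ext x; exact Iff.rfl
  have hfr2 : Subalgebra.toSubmodule m.range = LinearMap.range m.toLinearMap := by
    ext x; exact Iff.rfl
  rw [hfr1, hfr2] at hsub
  haveI : FiniteDimensional K (LinearMap.range m.toLinearMap) := by
    infer_instance
  have hrkeq : Module.finrank K (LinearMap.range f.toLinearMap)
      = Module.finrank K (LinearMap.range m.toLinearMap) := by
    rw [LinearMap.finrank_range_of_inj hfinj, LinearMap.finrank_range_of_inj hminj,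
      hdim, Module.finrank_matrix]
    simp [pow_two]
  have heq : LinearMap.range f.toLinearMap = LinearMap.range m.toLinearMap :=
    Submodule.eq_of_le_of_finrank_eq hsub hrkeq
  -- now derive n = 1
  by_contra hn1
  have hn2 : 2 ≤ n := by omega
  set i0 : Fin n := ⟨0, by omega⟩
  set i1 : Fin n := ⟨1, by omega⟩
  have hne : i0 ≠ i1 := by simp [i0, i1, Fin.ext_iff]
  have hmem : ∀ x : Matrix (Fin n) (Fin n) K, ∃ a : D, f a = m x := by
    intro x
    have : m x ∈ LinearMap.range f.toLinearMap := heq ▸ ⟨x, rfl⟩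
    exact this
  obtain ⟨a, ha⟩ := hmem (Matrix.single i0 i0 1)
  obtain ⟨b, hb⟩ := hmem (Matrix.single i1 i1 1)
  have hab : f (a * b) = 0 := by
    have hz : (Matrix.single i0 i0 1 : Matrix (Fin n) (Fin n) K)
        * Matrix.single i1 i1 1 = 0 := Matrix.single_mul_single_of_ne _ _ _ _ hne _
    rw [_root_.map_mul, ha, hb, ← _root_.map_mul m, hz, _root_.map_zero]
  have : a * b = 0 := hfinj (by rw [hab, _root_.map_zero])
  rcases mul_eq_zero.mp this with rfl | rfl
  · rw [_root_.map_zero] at ha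
    have : (Matrix.single i0 i0 1 : Matrix (Fin n) (Fin n) K) = 0 :=
      hminj (by rw [← ha, _root_.map_zero])
    have := congrFun (congrFun this i0) i0
    simp at this
  · rw [_root_.map_zero] at hb
    have : (Matrix.single i1 i1 1 : Matrix (Fin n) (Fin n) K) = 0 :=
      hminj (by rw [← hb, _root_.map_zero])
    have := congrFun (congrFun this i1) i1
    simp at this
end

section
/- Descent of quiver representations with scalar endomorphisms: let L be a field of characteristic 0 and E an algebraic closure of L. Let a quiver be given by finite sets V (vertices) and Edg (edges) with source and target maps s, t : Edg → V, and let n : V → ℕ be a dimension vector. Let A = (A_e)_{e ∈ Edg} and B = (B_e)_{e ∈ Edg} be two representations over L, i.e. A_e, B_e ∈ Matrix(Fin n(t e), Fin n(s e), L). Suppose they become isomorphic over E, i.e. there exist invertible matrices h_v ∈ GL_{n(v)}(E) with h_{t e} · A_e^E = B_e^E · h_{s e} for all e (where A_e^E, B_e^E denote the matrices with entries mapped into E), and suppose the endomorphisms of A over E are scalar, i.e. every family (f_v)_{v ∈ V} of matrices f_v ∈ Matrix(Fin n(v), Fin n(v), E) satisfying f_{t e} · A_e^E = A_e^E · f_{s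 e} for all e is of the form f_v = λ · 1 for a single scalar λ ∈ E independent of v. Then A and B are already isomorphic over L: there exist invertible matrices g_v ∈ GL_{n(v)}(L) with g_{t e} · A_e = B_e · g_{s e} for all e ∈ Edg. -/
open Matrix in
/-- Hilbert 90 descent for quiver representations: if two representations of a
quiver over a field `L` of characteristic `0` become isomorphic over an algebraic
closure `E` of `L`, and the endomorphisms of the first representation over `E`
are scalar, then the two representations are already isomorphic over `L`. -/
theorem quiver_rep_descent
    (L : Type*) [Field L] [CharZero L]
    (E : Type*) [Field E] [Algebra L E] [IsAlgClosure L E]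
    (V Edg : Type*) [Fintype V] [Fintype Edg]
    (s t : Edg → V) (n : V → ℕ)
    (A B : (e : Edg) → Matrix (Fin (n (t e))) (Fin (n (s e))) L)
    (hiso : ∃ h : (v : V) → GL (Fin (n v)) E,
      ∀ e : Edg, (h (t e) : Matrix (Fin (n (t e))) (Fin (n (t e))) E) *
          (A e).map (algebraMap L E) =
        (B e).map (algebraMap L E) *
          (h (s e) : Matrix (Fin (n (s e))) (Fin (n (s e))) E))
    (hscalar : ∀ f : (v : V) → Matrix (Fin (n v)) (Fin (n v)) E,
      (∀ e : Edg, f (t e) * (A e).map (algebraMap L E) =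
        (A e).map (algebraMap L E) * f (s e)) →
      ∃ lam : E, ∀ v : V, f v = lam • (1 : Matrix (Fin (n v)) (Fin (n v)) E)) :
    ∃ g : (v : V) → GL (Fin (n v)) L,
      ∀ e : Edg, (g (t e) : Matrix (Fin (n (t e))) (Fin (n (t e))) L) * A e =
        B e * (g (s e) : Matrix (Fin (n (s e))) (Fin (n (s e))) L) := by
  classical
  obtain ⟨h, hh⟩ := hiso
  set φ := algebraMap L E with hφ
  have hφinj : Function.Injective φ := (algebraMap L E).injective
  -- It suffices to find invertible matrices over L intertwining A and B.
  suffices key : ∃ g : (v : V) → Matrix (Fin (n v)) (Fin (n v)) L,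
      (∀ e, g (t e) * A e = B e * g (s e)) ∧ ∀ v, IsUnit (g v) by
    obtain ⟨g, hg1, hg2⟩ := key
    refine ⟨fun v => (hg2 v).unit, fun e => ?_⟩
    simpa [IsUnit.unit_spec] using hg1 e
  by_cases hzero : ∀ v, (h v : Matrix (Fin (n v)) (Fin (n v)) E) = 0
  · -- degenerate case: all sizes are zero
    have hnv : ∀ v, n v = 0 := by
      intro v
      by_contra hv
      have h1 : (1 : Matrix (Fin (n v)) (Fin (n v)) E) = 0 := by
        have := (h v).mul_inv
        rw [hzero v, zero_mul] at this
        exact this.symm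
      have := congrFun (congrFun h1 ⟨0, Nat.pos_of_ne_zero hv⟩) ⟨0, Nat.pos_of_ne_zero hv⟩
      simp [Matrix.one_apply] at this
    refine ⟨fun v => 1, fun e => ?_, fun v => isUnit_one⟩
    ext a c
    exact absurd a.2 (by simp [hnv])
  · push_neg at hzero
    obtain ⟨v₀, hv₀⟩ := hzero
    -- span of all entries of h
    set ent : ((Σ v : V, Fin (n v) × Fin (n v))) → E :=
      fun p => (h p.1 : Matrix (Fin (n p.1)) (Fin (n p.1)) E) p.2.1 p.2.2 with hent
    set W : Submodule L E := Submodule.span L (Set.range ent) with hW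
    have hWfd : FiniteDimensional L W :=
      FiniteDimensional.span_of_finite L (Set.finite_range ent)
    set k := Module.finrank L W with hk
    set b : Module.Basis (Fin k) L W := Module.finBasis L W with hb
    have hmem : ∀ v (i j : Fin (n v)), (h v : Matrix (Fin (n v)) (Fin (n v)) E) i j ∈ W :=
      fun v i j => Submodule.subset_span ⟨⟨v, i, j⟩, rfl⟩
    set g : Fin k → (v : V) → Matrix (Fin (n v)) (Fin (n v)) L :=
      fun i v => Matrix.of fun a c =>
        b.repr ⟨(h v : Matrix (Fin (n v)) (Fin (n v)) E) a c, hmem v a c⟩ i with hg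
    have hrep : ∀ v, (h v : Matrix (Fin (n v)) (Fin (n v)) E)
        = ∑ i, (b i : E) • (g i v).map φ := by
      intro v
      ext a c
      have h2 : (h v : Matrix (Fin (n v)) (Fin (n v)) E) a c
          = ∑ i, b.repr ⟨(h v : Matrix (Fin (n v)) (Fin (n v)) E) a c, hmem v a c⟩ i •
              (b i : E) := by
        have h3 := congrArg W.subtype
          (b.sum_repr ⟨(h v : Matrix (Fin (n v)) (Fin (n v)) E) a c, hmem v a c⟩).symm
        simpa only [map_sum, map_smul, Submodule.subtype_apply] using h3
      rw [Matrix.sum_apply, h2]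
      refine Finset.sum_congr rfl fun i _ => ?_
      simp [hg, Matrix.smul_apply, Matrix.map_apply, Algebra.smul_def, smul_eq_mul]
      ring
    -- linear independence of the basis elements, viewed in E
    have hbE : LinearIndependent L (fun i => (b i : E)) :=
      b.linearIndependent.map' W.subtype (Submodule.ker_subtype W)
    have hbE' : ∀ d : Fin k → L, (∑ i, d i • (b i : E)) = 0 → ∀ i, d i = 0 :=
      Fintype.linearIndependent_iff.mp hbE
    -- each g i intertwines A and B over L
    have hint : ∀ i e, g i (t e) * A e = B e * g i (s e) := by
      intro i e
      have h1 : ∑ j, (b j : E) •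
          ((g j (t e) * A e).map φ - (B e * g j (s e)).map φ) = 0 := by
        have h2 := hh e
        rw [hrep (t e), hrep (s e), Matrix.sum_mul, Matrix.mul_sum] at h2
        have h3 : ∀ j, ((b j : E) • (g j (t e)).map φ) * (A e).map φ
            = (b j : E) • (g j (t e) * A e).map φ := by
          intro j; rw [Matrix.smul_mul, Matrix.map_mul]
        have h4 : ∀ j, (B e).map φ * ((b j : E) • (g j (s e)).map φ)
            = (b j : E) • (B e * g j (s e)).map φ := by
          intro j; rw [Matrix.mul_smul, Matrix.map_mul]
        simp only [h3, h4] at h2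
        simp only [smul_sub, Finset.sum_sub_distrib, h2, sub_self]
      have h5 : ∀ a c, ∀ j : Fin k,
          (g j (t e) * A e - B e * g j (s e)) a c = 0 := by
        intro a c
        apply hbE'
        have h1' := congrFun (congrFun h1 a) c
        simp only [Matrix.sum_apply, Matrix.zero_apply] at h1'
        rw [← h1']
        refine Finset.sum_congr rfl fun j _ => ?_
        simp only [Matrix.smul_apply, Matrix.sub_apply, Matrix.map_apply, Algebra.smul_def,
          smul_eq_mul, map_sub, Algebra.algebraMap_self, RingHom.id_apply]
        ring
      have h6 : g i (t e) * A e - B e * g i (s e) = 0 := by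
        ext a c
        simpa using h5 a c i
      exact sub_eq_zero.mp h6
    -- each (g i).map φ is a scalar multiple of h
    have hendo : ∀ i e,
        ((↑(h (t e))⁻¹ : Matrix (Fin (n (t e))) (Fin (n (t e))) E) * (g i (t e)).map φ) *
          (A e).map φ
        = (A e).map φ *
          ((↑(h (s e))⁻¹ : Matrix (Fin (n (s e))) (Fin (n (s e))) E) * (g i (s e)).map φ) := by
      intro i e
      have h9 : (g i (t e)).map φ * (A e).map φ = (B e).map φ * (g i (s e)).map φ := by
        rw [← Matrix.map_mul, ← Matrix.map_mul, hint i e]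
      have h10 : (↑(h (t e))⁻¹ : Matrix (Fin (n (t e))) (Fin (n (t e))) E) * (B e).map φ
          = (A e).map φ * (↑(h (s e))⁻¹ : Matrix (Fin (n (s e))) (Fin (n (s e))) E) := by
        have h11 := hh e
        have := congrArg (fun X =>
          (↑(h (t e))⁻¹ : Matrix (Fin (n (t e))) (Fin (n (t e))) E) * X *
          (↑(h (s e))⁻¹ : Matrix (Fin (n (s e))) (Fin (n (s e))) E)) h11
        rw [← Matrix.mul_assoc, ← Matrix.mul_assoc, (h (t e)).inv_mul, Matrix.one_mul] at this
        rw [Matrix.mul_assoc ((↑(h (t e))⁻¹ : Matrix (Fin (n (t e))) (Fin (n (t e))) E) *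
          (B e).map φ), (h (s e)).mul_inv, Matrix.mul_one] at this
        exact this.symm
      calc (↑(h (t e))⁻¹ : Matrix (Fin (n (t e))) (Fin (n (t e))) E) *
            (g i (t e)).map φ * (A e).map φ
          = (↑(h (t e))⁻¹ : Matrix (Fin (n (t e))) (Fin (n (t e))) E) *
            ((B e).map φ * (g i (s e)).map φ) := by rw [Matrix.mul_assoc, h9]
        _ = (A e).map φ * ((↑(h (s e))⁻¹ : Matrix (Fin (n (s e))) (Fin (n (s e))) E) *
            (g i (s e)).map φ) := by rw [← Matrix.mul_assoc, h10, Matrix.mul_assoc]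
    have hlam : ∀ i, ∃ lam : E, ∀ v,
        (g i v).map φ = lam • (h v : Matrix (Fin (n v)) (Fin (n v)) E) := by
      intro i
      obtain ⟨lam, hl⟩ := hscalar
        (fun v => (↑(h v)⁻¹ : Matrix (Fin (n v)) (Fin (n v)) E) * (g i v).map φ) (hendo i)
      refine ⟨lam, fun v => ?_⟩
      have h7 := hl v
      have h8 : (h v : Matrix (Fin (n v)) (Fin (n v)) E) *
          ((↑(h v)⁻¹ : Matrix (Fin (n v)) (Fin (n v)) E) * (g i v).map φ)
          = (g i v).map φ := by
        rw [← mul_assoc, (h v).mul_inv, one_mul]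
      rw [h7] at h8
      have h8' : (h v : Matrix (Fin (n v)) (Fin (n v)) E) *
          (lam • (1 : Matrix (Fin (n v)) (Fin (n v)) E))
          = lam • (h v : Matrix (Fin (n v)) (Fin (n v)) E) := by
        rw [Matrix.mul_smul, mul_one]
      rw [← h8, h8']
    choose lam hlam using hlam
    -- the scalar identity forces ∑ bᵢ·λᵢ = 1
    set mu : E := ∑ i, (b i : E) * lam i with hmu
    have hmu1 : mu = 1 := by
      have h12 : (h v₀ : Matrix (Fin (n v₀)) (Fin (n v₀)) E)
          = mu • (h v₀ : Matrix (Fin (n v₀)) (Fin (n v₀)) E) := by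
        conv_lhs => rw [hrep v₀]
        rw [hmu, Finset.sum_smul]
        refine Finset.sum_congr rfl fun i _ => ?_
        rw [hlam i v₀, smul_smul]
      by_contra hmune
      apply hv₀
      ext a c
      have := congrFun (congrFun h12 a) c
      simp only [Matrix.smul_apply, smul_eq_mul, Matrix.zero_apply] at this ⊢
      have h13 : (1 - mu) * (h v₀ : Matrix (Fin (n v₀)) (Fin (n v₀)) E) a c = 0 := by
        linear_combination this
      rcases mul_eq_zero.mp h13 with h14 | h14
      · exact absurd (sub_eq_zero.mp h14).symm hmune
      · exact h14
    -- pick i with lam i ≠ 0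
    have hex : ∃ i, lam i ≠ 0 := by
      by_contra hno
      push_neg at hno
      rw [hmu] at hmu1
      simp [hno] at hmu1
    obtain ⟨i, hi⟩ := hex
    refine ⟨g i, hint i, fun v => ?_⟩
    rw [Matrix.isUnit_iff_isUnit_det, isUnit_iff_ne_zero]
    intro hdet
    have h15 : φ ((g i v).det) = ((g i v).map φ).det := RingHom.map_det φ (g i v)
    have h16 : ((g i v).map φ).det = lam i ^ (n v) * (h v : Matrix (Fin (n v)) (Fin (n v)) E).det := by
      rw [hlam i v, Matrix.det_smul, Fintype.card_fin]
    have h17 : (h v : Matrix (Fin (n v)) (Fin (n v)) E).det ≠ 0 := by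
      rw [← isUnit_iff_ne_zero, ← Matrix.isUnit_iff_isUnit_det]
      exact (h v).isUnit
    have h18 : φ ((g i v).det) ≠ 0 := by
      rw [h15, h16]
      exact mul_ne_zero (pow_ne_zero _ hi) h17
    rw [hdet, map_zero] at h18
    exact h18 rfl
end
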